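/- Fix an outcome ô ∈ {Reject, Accept}^N. Let D ⊆ C_ô, let F ⊆ ℝ^N be a closed set with F ∩ C = p_ô + D, and set G = p_ô + R(D). Then vol_{N−1}(∂G ∩ (∂C \ Y_ô)) ≤ vol_{N−1}(F ∩ (∂C \ Y_ô)). -/

import Mathlib

open MeasureTheory
open scoped ENNReal

/-- Possible outcomes of a test on a single coin. -/
inductive Outcome : Type
  | Reject : Outcome
  | Accept : Outcome
deriving DecidableEq

/-- The cube `C = [p₀, q₀]^N ⊆ ℝ^N`. -/
def cube (N : ℕ) (p₀ q₀ : ℝ) : Set (EuclideanSpace ℝ (Fin N)) :=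
  {x | ∀ i, x i ∈ Set.Icc p₀ q₀}

/-- The corner `p_ô` of the cube `[p₀, q₀]^N` associated with the outcome vector `ô`:
`(p_ô)ᵢ = p₀` if `ôᵢ = Reject` and `(p_ô)ᵢ = q₀` if `ôᵢ = Accept`. -/
noncomputable def corner {N : ℕ} (p₀ q₀ : ℝ) (o : Fin N → Outcome) :
    EuclideanSpace ℝ (Fin N) :=
  WithLp.toLp 2 (fun i => if o i = Outcome.Accept then q₀ else p₀)

/-- The box `C_ô = ∏ᵢ Jᵢ` with `Jᵢ = [0, ε]` if `ôᵢ = Reject` and `Jᵢ = [−ε, 0]` if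
`ôᵢ = Accept`, where `ε = q₀ − p₀`; it satisfies `C = p_ô + C_ô`. -/
def cornerBox {N : ℕ} (p₀ q₀ : ℝ) (o : Fin N → Outcome) :
    Set (EuclideanSpace ℝ (Fin N)) :=
  {x | ∀ i, if o i = Outcome.Accept then x i ∈ Set.Icc (-(q₀ - p₀)) 0
    else x i ∈ Set.Icc 0 (q₀ - p₀)}

/-- `Y_ô`: a point `p` of `∂C` *agrees* with the outcome `ô` if there is no coordinate `i` with
(`pᵢ = p₀` and `ôᵢ = Accept`) or (`pᵢ = q₀` and `ôᵢ = Reject`). -/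
def agreeSet {N : ℕ} (p₀ q₀ : ℝ) (o : Fin N → Outcome) :
    Set (EuclideanSpace ℝ (Fin N)) :=
  {p | p ∈ frontier (cube N p₀ q₀) ∧
    ∀ i, ¬((p i = p₀ ∧ o i = Outcome.Accept) ∨ (p i = q₀ ∧ o i = Outcome.Reject))}

/-- The real sign `±1` associated to a Boolean. -/
noncomputable def sgn (b : Bool) : ℝ := if b then 1 else -1

/-- The reflection `R(S; σ) = {σ ∗ x : x ∈ S}` of a set `S ⊆ ℝ^N` by a sign vector `σ`,
where `∗` denotes componentwise multiplication. -/
noncomputable def reflectSet {N : ℕ} (σ : Fin N → Bool)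
    (S : Set (EuclideanSpace ℝ (Fin N))) : Set (EuclideanSpace ℝ (Fin N)) :=
  (fun x => (WithLp.toLp 2 (fun i => sgn (σ i) * x i) : EuclideanSpace ℝ (Fin N))) '' S

/-- The union `R(S) = ⋃_σ R(S; σ)` of all `2^N` coordinate reflections of `S`. -/
noncomputable def reflectAll {N : ℕ} (S : Set (EuclideanSpace ℝ (Fin N))) :
    Set (EuclideanSpace ℝ (Fin N)) :=
  ⋃ σ : Fin N → Bool, reflectSet σ S

/-- The translate `v + S` of a set `S ⊆ ℝ^N`. -/
def translateSet {N : ℕ} (v : EuclideanSpace ℝ (Fin N))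
    (S : Set (EuclideanSpace ℝ (Fin N))) : Set (EuclideanSpace ℝ (Fin N)) :=
  (fun x => v + x) '' S

/-! The only points of `p_ô + R(D)` that survive in the closure inside the cube `C` come from
`p_ô + closure D`: a reflection keeps a point of the box `C_ô` in `C_ô` only if it fixes it,
since the box lies on one side of every coordinate hyperplane through the origin. Hence
`∂G ∩ C ⊆ F`, and the measure inequality is monotonicity. -/

section

variable {N : ℕ}

theorem sgn_mul_self (b : Bool) : sgn b * sgn b = 1 := by
  cases b <;> norm_num [sgn]

noncomputable def signReflection (σ : Fin N → Bool) :
    EuclideanSpace ℝ (Fin N) ≃ₜ EuclideanSpace ℝ (Fin N) where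
  toFun x := WithLp.toLp 2 fun i => sgn (σ i) * x i
  invFun x := WithLp.toLp 2 fun i => sgn (σ i) * x i
  left_inv x := by ext i; simp [← mul_assoc, sgn_mul_self]
  right_inv x := by ext i; simp [← mul_assoc, sgn_mul_self]
  continuous_toFun := by fun_prop
  continuous_invFun := by fun_prop

@[simp]
theorem signReflection_apply (σ : Fin N → Bool) (x : EuclideanSpace ℝ (Fin N)) (i : Fin N) :
    signReflection σ x i = sgn (σ i) * x i :=
  rfl

theorem closure_reflectAll (S : Set (EuclideanSpace ℝ (Fin N))) :
    closure (reflectAll S) = reflectAll (closure S) := by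
  simp only [reflectAll, closure_iUnion_of_finite]
  exact Set.iUnion_congr fun σ => ((signReflection σ).image_closure S).symm

theorem closure_translateSet (v : EuclideanSpace ℝ (Fin N))
    (S : Set (EuclideanSpace ℝ (Fin N))) :
    closure (translateSet v S) = translateSet v (closure S) :=
  ((Homeomorph.addLeft v).image_closure S).symm

theorem isClosed_cube (p₀ q₀ : ℝ) : IsClosed (cube N p₀ q₀) := by
  simp only [cube, Set.ofPred_forall]
  exact isClosed_iInter fun i => isClosed_Icc.preimage (by fun_prop)

theorem isClosed_cornerBox (p₀ q₀ : ℝ) (o : Fin N → Outcome) :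
    IsClosed (cornerBox p₀ q₀ o) := by
  simp only [cornerBox, Set.ofPred_forall]
  refine isClosed_iInter fun i => ?_
  split_ifs
  all_goals exact isClosed_Icc.preimage (by fun_prop)

theorem translateSet_corner_cornerBox (p₀ q₀ : ℝ) (o : Fin N → Outcome) :
    translateSet (corner p₀ q₀ o) (cornerBox p₀ q₀ o) = cube N p₀ q₀ := by
  ext p
  constructor
  · rintro ⟨x, hx, rfl⟩ i
    have hxi := hx i
    simp only [corner, PiLp.add_apply, Set.mem_Icc] at hxi ⊢
    split_ifs at hxi ⊢ <;> constructor <;> linarith [hxi.1, hxi.2]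
  · intro hp
    refine ⟨p - corner p₀ q₀ o, fun i => ?_, add_sub_cancel _ _⟩
    have hpi := hp i
    simp only [corner, PiLp.sub_apply, Set.mem_Icc] at hpi ⊢
    split_ifs <;> constructor <;> linarith [hpi.1, hpi.2]

theorem signReflection_eq_self_of_mem_cornerBox {p₀ q₀ : ℝ} {o : Fin N → Outcome}
    (σ : Fin N → Bool) {z : EuclideanSpace ℝ (Fin N)} (hz : z ∈ cornerBox p₀ q₀ o)
    (hσz : signReflection σ z ∈ cornerBox p₀ q₀ o) : signReflection σ z = z := by
  ext i
  have hzi := hz i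
  have hσzi := hσz i
  rw [signReflection_apply] at hσzi ⊢
  cases hσi : σ i
  · simp only [sgn, hσi, Bool.false_eq_true, if_false, Set.mem_Icc] at hzi hσzi ⊢
    split_ifs at hzi hσzi <;> linarith [hzi.1, hzi.2, hσzi.1, hσzi.2]
  · simp [sgn]

theorem reflectAll_inter_cornerBox_subset {p₀ q₀ : ℝ} {o : Fin N → Outcome}
    {D : Set (EuclideanSpace ℝ (Fin N))} (hD : D ⊆ cornerBox p₀ q₀ o) :
    reflectAll D ∩ cornerBox p₀ q₀ o ⊆ D := by
  rintro _ ⟨hR, hbox⟩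
  obtain ⟨σ, z, hz, rfl⟩ := Set.mem_iUnion.mp hR
  rwa [← signReflection_eq_self_of_mem_cornerBox σ (hD hz) hbox] at hz

theorem closure_translateSet_reflectAll_inter_cube_subset {p₀ q₀ : ℝ} {o : Fin N → Outcome}
    {D : Set (EuclideanSpace ℝ (Fin N))} (hD : D ⊆ cornerBox p₀ q₀ o) :
    closure (translateSet (corner p₀ q₀ o) (reflectAll D)) ∩ cube N p₀ q₀ ⊆
      translateSet (corner p₀ q₀ o) (closure D) := by
  rw [closure_translateSet, closure_reflectAll, ← translateSet_corner_cornerBox, translateSet,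
    translateSet, ← Set.image_inter (add_right_injective _)]
  exact Set.image_mono
    (reflectAll_inter_cornerBox_subset (closure_minimal hD (isClosed_cornerBox p₀ q₀ o)))

end

theorem stmt_9_general {N : ℕ} (p₀ q₀ : ℝ)
    (o : Fin N → Outcome) (D : Set (EuclideanSpace ℝ (Fin N)))
    (hD : D ⊆ cornerBox p₀ q₀ o)
    (F : Set (EuclideanSpace ℝ (Fin N))) (hFclosed : IsClosed F)
    (hF : F ∩ cube N p₀ q₀ = translateSet (corner p₀ q₀ o) D) :
    μH[((N : ℝ) - 1)] (frontier (translateSet (corner p₀ q₀ o) (reflectAll D)) ∩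
        (frontier (cube N p₀ q₀) \ agreeSet p₀ q₀ o)) ≤
      μH[((N : ℝ) - 1)] (F ∩ (frontier (cube N p₀ q₀) \ agreeSet p₀ q₀ o)) := by
  refine measure_mono fun p ⟨hpG, hpS⟩ => ⟨?_, hpS⟩
  have hpC : p ∈ cube N p₀ q₀ := (isClosed_cube p₀ q₀).frontier_subset hpS.1
  have hDF : closure (translateSet (corner p₀ q₀ o) D) ⊆ F :=
    hFclosed.closure_subset_iff.2 (hF ▸ Set.inter_subset_left)
  rw [closure_translateSet] at hDF
  exact hDF
    (closure_translateSet_reflectAll_inter_cube_subset hD ⟨frontier_subset_closure hpG, hpC⟩)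

/-- **Boundary of the reflected set on the disagreeing boundary.**
For an outcome `ô`, a subset `D ⊆ C_ô`, a closed set `F` with `F ∩ C = p_ô + D`, and
`G = p_ô + R(D)`, we have `vol_{N−1}(∂G ∩ (∂C \ Y_ô)) ≤ vol_{N−1}(F ∩ (∂C \ Y_ô))`. -/
theorem stmt_9 {N : ℕ} (hN : 1 ≤ N) (p₀ q₀ : ℝ) (hpq : p₀ < q₀)
    (o : Fin N → Outcome) (D : Set (EuclideanSpace ℝ (Fin N)))
    (hD : D ⊆ cornerBox p₀ q₀ o)
    (F : Set (EuclideanSpace ℝ (Fin N))) (hFclosed : IsClosed F)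
    (hF : F ∩ cube N p₀ q₀ = translateSet (corner p₀ q₀ o) D) :
    μH[((N : ℝ) - 1)] (frontier (translateSet (corner p₀ q₀ o) (reflectAll D)) ∩
        (frontier (cube N p₀ q₀) \ agreeSet p₀ q₀ o)) ≤
      μH[((N : ℝ) - 1)] (F ∩ (frontier (cube N p₀ q₀) \ agreeSet p₀ q₀ o)) :=
  stmt_9_general p₀ q₀ o D hD F hFclosed hF
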